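/- On the unit sphere S², fix k ∈ ℕ with k ≥ 1 and the north–south great circle replaced as follows: let S¹ = {p ∈ S² : p₃ = 0} be the equator, and let x₀, y₀ ∈ S¹ be at spherical distance 2s·(π/2k) with gcd(s, k) = 1. Define σ_s as the union of the half-circles {p ∈ S² : dist_{S²}(p, x₀) = (1+2i)·π/(2k), p₃ ≥ 0} and {p ∈ S² : dist_{S²}(p, y₀) = (1+2i)·π/(2k), p₃ ≤ 0} for i = 0, …, k−1. Then σ_s is a connected closed subset of S². -/

import Mathlib

open Real

/-- The intrinsic (angular) distance between points of the unit sphere in `ℝ³`. -/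
noncomputable def sphereDist (p q : EuclideanSpace ℝ (Fin 3)) : ℝ :=
  Real.arccos (inner ℝ p q)

/-- The curve `σ_s ⊂ S²`: the union of the half-circles of spherical radii
`(1+2i)·π/(2k)`, `i = 0, …, k-1`, around `x₀` in the closed upper hemisphere and
around `y₀` in the closed lower hemisphere. -/
def sigmaSphere (k : ℕ) (x₀ y₀ : EuclideanSpace ℝ (Fin 3)) :
    Set (EuclideanSpace ℝ (Fin 3)) :=
  {p | p ∈ Metric.sphere (0 : EuclideanSpace ℝ (Fin 3)) 1 ∧ 0 ≤ p 2 ∧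
        ∃ i : ℕ, i < k ∧ sphereDist p x₀ = (1 + 2 * i) * (π / (2 * k))} ∪
  {p | p ∈ Metric.sphere (0 : EuclideanSpace ℝ (Fin 3)) 1 ∧ p 2 ≤ 0 ∧
        ∃ i : ℕ, i < k ∧ sphereDist p y₀ = (1 + 2 * i) * (π / (2 * k))}

/-!
Write `y₀` as the rotation of `x₀` about the vertical axis by `2s'·u`, where `u = π/(2k)` and
`s' = ±s`. Every half-circle is connected: in an orthonormal frame adapted to its centre and its
hemisphere it is the graph of `t ↦ √(r² - t²)` over a segment. Index the upper half-circles around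
`x₀` by `m ∈ ℤ`, with radius `(1+2m)·u` (every odd multiple of `u` gives one of the `k` circles of
`σ_s`), and pair the `m`-th one with the `(m-s')`-th lower one around `y₀`: both pass through the
equator point at angle `(1+2m)·u` from `x₀`. Pair `m` meets pairs `m+2s'`, `m+2k` and `-1-m` at
equator points, and as `s'` and `k` are coprime these moves connect all of `ℤ`.
-/

open Set Module Relation
open scoped RealInnerProductSpace

theorem Int.reflTransGen_add_mul {r : ℤ → ℤ → Prop} [Std.Symm r] {a : ℤ}
    (h : ∀ m, r m (m + a)) (m t : ℤ) : ReflTransGen r m (m + a * t) := by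
  induction t using Int.induction_on with
  | zero => simpa using ReflTransGen.refl
  | succ t ih => exact ih.tail (by simpa [mul_add, add_assoc] using h (m + a * t))
  | pred t ih =>
    have step := h (m + a * (-t - 1))
    rw [show m + a * (-t - 1) + a = m + a * -t by ring] at step
    exact ih.tail (symm_of r step)

theorem Int.reflTransGen_of_isCoprime {r : ℤ → ℤ → Prop} [Std.Symm r] {a b : ℤ}
    (hab : IsCoprime a b) (ha : ∀ m, r m (m + 2 * a)) (hb : ∀ m, r m (m + 2 * b))
    (hneg : ∀ m, r m (-1 - m)) (m n : ℤ) : ReflTransGen r m n := by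
  obtain ⟨x, y, hxy⟩ := hab
  have heven : ∀ j, ReflTransGen r (2 * j) 0 := fun j => by
    have := (Int.reflTransGen_add_mul ha (2 * j) (-j * x)).trans
      (Int.reflTransGen_add_mul hb _ (-j * y))
    convert this using 1
    linear_combination (2 * j) * hxy
  have hzero : ∀ m, ReflTransGen r m 0 := fun m => by
    obtain ⟨j, rfl | rfl⟩ := Int.even_or_odd' m
    · exact heven j
    · exact (ReflTransGen.single (hneg _)).trans (by convert heven (-j - 1) using 2; ring)
  exact (hzero m).trans (symm_of (ReflTransGen r) (hzero n))

theorem exists_lt_cos_odd_mul_eq {k : ℕ} (hk : 0 < k) (m : ℤ) :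
    ∃ i : ℕ, i < k ∧ cos ((1 + 2 * m) * (π / (2 * k))) = cos ((1 + 2 * i) * (π / (2 * k))) := by
  have hk' : (0 : ℤ) < 2 * k := by omega
  obtain ⟨r, t, hm, hr0, hrk⟩ : ∃ r t : ℤ, m = 2 * k * t + r ∧ 0 ≤ r ∧ r < 2 * k :=
    ⟨m % (2 * k), m / (2 * k), (Int.mul_ediv_add_emod m _).symm, Int.emod_nonneg _ hk'.ne',
      Int.emod_lt_of_pos _ hk'⟩
  have hπ : π = 2 * k * (π / (2 * k)) := by field_simp
  generalize π / (2 * k) = u at hπ ⊢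
  have hmR : (m : ℝ) = 2 * k * t + r := by exact_mod_cast hm
  simp_rw [cos_eq_cos_iff]
  by_cases hrk' : r < k
  · refine ⟨r.toNat, by omega, -t, Or.inl ?_⟩
    have hi : ((r.toNat : ℕ) : ℝ) = r := by exact_mod_cast Int.toNat_of_nonneg hr0
    rw [hi, hmR]
    push_cast
    linear_combination (2 * t) * hπ
  · refine ⟨(2 * k - 1 - r).toNat, by omega, t + 1, Or.inr ?_⟩
    have hi : (((2 * k - 1 - r).toNat : ℕ) : ℝ) = 2 * k - 1 - r := by
      exact_mod_cast Int.toNat_of_nonneg (by omega : (0 : ℤ) ≤ 2 * k - 1 - r)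
    rw [hi, hmR]
    push_cast
    linear_combination (-2 * t - 2) * hπ

section HalfCircle

variable {V : Type*} [NormedAddCommGroup V] [InnerProductSpace ℝ V]

def halfCircle (x n : V) (c : ℝ) : Set V :=
  {p ∈ Metric.sphere (0 : V) 1 | 0 ≤ ⟪p, n⟫ ∧ ⟪p, x⟫ = c}

theorem exists_orthonormalBasis_fin_three (hV : finrank ℝ V = 3) {x n : V}
    (hx : ‖x‖ = 1) (hn : ‖n‖ = 1) (hxn : ⟪x, n⟫ = 0) :
    ∃ b : OrthonormalBasis (Fin 3) ℝ V, b 0 = x ∧ b 2 = n := by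
  have : FiniteDimensional ℝ V := Module.finite_of_finrank_pos (by omega)
  have hon : Orthonormal ℝ (({0, 2} : Set (Fin 3)).domRestrict ![x, n, n]) := by
    rw [orthonormal_iff_ite]
    rintro ⟨i, hi⟩ ⟨j, hj⟩
    simp only [Set.mem_insert_iff, Set.mem_singleton_iff] at hi hj
    rcases hi with rfl | rfl <;> rcases hj with rfl | rfl <;>
      simp [Set.domRestrict_apply, hx, hn, hxn, real_inner_comm x n]
  obtain ⟨b, hb⟩ := hon.exists_orthonormalBasis_extension_of_card_eq (by simpa using hV)
  exact ⟨b, hb 0 (by simp), hb 2 (by simp)⟩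

theorem isConnected_halfCircle (hV : finrank ℝ V = 3) {x n : V}
    (hx : ‖x‖ = 1) (hn : ‖n‖ = 1) (hxn : ⟪x, n⟫ = 0) {c : ℝ} (hc : |c| ≤ 1) :
    IsConnected (halfCircle x n c) := by
  obtain ⟨b, rfl, rfl⟩ := exists_orthonormalBasis_fin_three hV hx hn hxn
  set r := √(1 - c ^ 2)
  have hr : r ^ 2 = 1 - c ^ 2 := Real.sq_sqrt (by nlinarith [abs_le.1 hc, sq_abs c])
  have hrepr : ∀ p, ⟪b 0, p⟫ • b 0 + ⟪b 1, p⟫ • b 1 + ⟪b 2, p⟫ • b 2 = p := fun p => by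
    simpa [Fin.sum_univ_three] using b.sum_repr' p
  have hinner : ∀ i j, ⟪b i, b j⟫ = if i = j then 1 else 0 :=
    orthonormal_iff_ite.mp b.orthonormal
  have hsphere : ∀ p, p ∈ Metric.sphere (0 : V) 1 ↔
      ⟪b 0, p⟫ ^ 2 + ⟪b 1, p⟫ ^ 2 + ⟪b 2, p⟫ ^ 2 = 1 := fun p => by
    rw [mem_sphere_zero_iff_norm, ← pow_eq_one_iff_of_nonneg (norm_nonneg p) two_ne_zero,
      ← b.sum_sq_inner_right p, Fin.sum_univ_three]
  have himage : halfCircle (b 0) (b 2) c =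
      (fun t => c • b 0 + t • b 1 + √(r ^ 2 - t ^ 2) • b 2) '' Icc (-r) r := by
    ext p
    simp only [halfCircle, mem_ofPred_eq, mem_image, mem_Icc, hsphere, real_inner_comm _ p]
    constructor
    · rintro ⟨hp, hp2, rfl⟩
      have hp1 : ⟪b 1, p⟫ ^ 2 ≤ 1 - ⟪b 0, p⟫ ^ 2 := by nlinarith
      have hp2' : √(r ^ 2 - ⟪b 1, p⟫ ^ 2) = ⟪b 2, p⟫ := by
        rw [hr, ← Real.sqrt_sq hp2]
        congr 1
        linarith
      exact ⟨⟪b 1, p⟫, abs_le.mp (Real.abs_le_sqrt hp1), by rw [hp2', hrepr]⟩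
    · rintro ⟨t, ht, rfl⟩
      have hsq : 0 ≤ r ^ 2 - t ^ 2 := sub_nonneg.mpr (sq_le_sq' ht.1 ht.2)
      simp only [Fin.isValue, inner_add_right, inner_smul_right, inner_self_eq_norm_sq_to_K,
        OrthonormalBasis.norm_eq_one, ringHom_apply, one_pow, mul_one, hinner, zero_ne_one,
        ↓reduceIte, mul_zero, add_zero, Fin.reduceEq, one_ne_zero, zero_add, Real.sq_sqrt hsq,
        add_add_sub_cancel, sqrt_nonneg, and_self, and_true]
      linarith
  rw [himage]
  exact (isConnected_Icc (by simp [r])).image _ (by fun_prop)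

end HalfCircle

local notation "ℝ³" => EuclideanSpace ℝ (Fin 3)
local notation "e₂" => EuclideanSpace.single (2 : Fin 3) (1 : ℝ)

theorem inner_eq_fin_three (p q : ℝ³) : ⟪p, q⟫ = p 0 * q 0 + p 1 * q 1 + p 2 * q 2 := by
  simp [PiLp.inner_apply, Fin.sum_univ_three, mul_comm]

theorem norm_eq_one_iff_fin_three (p : ℝ³) : ‖p‖ = 1 ↔ p 0 ^ 2 + p 1 ^ 2 + p 2 ^ 2 = 1 := by
  rw [← pow_eq_one_iff_of_nonneg (norm_nonneg p) two_ne_zero, EuclideanSpace.real_norm_sq_eq,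
    Fin.sum_univ_three]

section RotZ

noncomputable def rotZ (θ : ℝ) (p : ℝ³) : ℝ³ :=
  !₂[cos θ * p 0 - sin θ * p 1, sin θ * p 0 + cos θ * p 1, p 2]

@[simp] theorem rotZ_apply_two (θ : ℝ) (p : ℝ³) : rotZ θ p 2 = p 2 := rfl

theorem rotZ_zero (p : ℝ³) : rotZ 0 p = p := by
  ext i; fin_cases i <;> simp [rotZ]

variable {x : ℝ³}

theorem inner_rotZ_rotZ (hx : ‖x‖ = 1) (hx2 : x 2 = 0) (θ φ : ℝ) :
    ⟪rotZ θ x, rotZ φ x⟫ = cos (θ - φ) := by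
  rw [norm_eq_one_iff_fin_three, hx2] at hx
  simp only [rotZ, hx2, inner_eq_fin_three, Matrix.cons_val_zero, Matrix.cons_val_one,
    Matrix.cons_val, mul_zero, add_zero, cos_sub]
  linear_combination (cos θ * cos φ + sin θ * sin φ) * hx

theorem inner_rotZ_self (hx : ‖x‖ = 1) (hx2 : x 2 = 0) (θ : ℝ) : ⟪rotZ θ x, x⟫ = cos θ := by
  simpa [rotZ_zero] using inner_rotZ_rotZ hx hx2 θ 0

theorem norm_rotZ (hx : ‖x‖ = 1) (hx2 : x 2 = 0) (θ : ℝ) : ‖rotZ θ x‖ = 1 := by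
  have := inner_rotZ_rotZ hx hx2 θ θ
  rwa [sub_self, cos_zero, real_inner_self_eq_norm_sq,
    pow_eq_one_iff_of_nonneg (norm_nonneg _) two_ne_zero] at this

theorem eq_rotZ_or_eq_rotZ_neg {y : ℝ³} (hx : ‖x‖ = 1) (hx2 : x 2 = 0) (hy : ‖y‖ = 1)
    (hy2 : y 2 = 0) :
    y = rotZ (arccos ⟪x, y⟫) x ∨ y = rotZ (-arccos ⟪x, y⟫) x := by
  have hb := abs_le.mp (abs_real_inner_le_norm x y)
  rw [hx, hy, one_mul] at hb
  rw [norm_eq_one_iff_fin_three, hx2] at hx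
  rw [norm_eq_one_iff_fin_three, hy2] at hy
  have hxy : ⟪x, y⟫ = x 0 * y 0 + x 1 * y 1 := by simp [inner_eq_fin_three, hx2]
  have hrot : ∀ δ, cos δ = ⟪x, y⟫ → sin δ = x 0 * y 1 - x 1 * y 0 → y = rotZ δ x := by
    intro δ hc hs
    ext i; fin_cases i
    · simp only [Fin.zero_eta, Fin.isValue, rotZ, hc, hxy, hs, Matrix.cons_val_zero]
      linear_combination (-y 0) * hx
    · simp only [Fin.mk_one, Fin.isValue, rotZ, hc, hxy, hs, Matrix.cons_val_one,
        Matrix.cons_val_zero]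
      linear_combination (-y 1) * hx
    · simp [rotZ, hx2, hy2]
  have hcross : (x 0 * y 1 - x 1 * y 0) ^ 2 = sin (arccos ⟪x, y⟫) ^ 2 := by
    rw [sin_arccos, sq_sqrt (by nlinarith), hxy]
    linear_combination (y 0 ^ 2 + y 1 ^ 2) * hx + hy
  rcases sq_eq_sq_iff_eq_or_eq_neg.mp hcross with h | h
  · exact Or.inl (hrot _ (cos_arccos hb.1 hb.2) h.symm)
  · exact Or.inr (hrot _ (by rw [cos_neg, cos_arccos hb.1 hb.2]) (by rw [sin_neg, h]))

end RotZ

theorem continuous_sphereDist_left (w : ℝ³) : Continuous fun p => sphereDist p w :=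
  continuous_arccos.comp (continuous_id.inner continuous_const)

theorem exists_sphereDist_eq_odd_mul_iff {k : ℕ} (hk : 0 < k) {p w : ℝ³} (hp : ‖p‖ = 1)
    (hw : ‖w‖ = 1) :
    (∃ i : ℕ, i < k ∧ sphereDist p w = (1 + 2 * i) * (π / (2 * k))) ↔
      ∃ m : ℤ, ⟪p, w⟫ = cos ((1 + 2 * m) * (π / (2 * k))) := by
  have hb := abs_le.mp (abs_real_inner_le_norm p w)
  rw [hp, hw, one_mul] at hb
  constructor
  · rintro ⟨i, -, hi⟩
    refine ⟨i, ?_⟩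
    rw [← cos_arccos hb.1 hb.2, ← sphereDist, hi]
    norm_cast
  · rintro ⟨m, hm⟩
    obtain ⟨i, hik, hi⟩ := exists_lt_cos_odd_mul_eq hk m
    refine ⟨i, hik, ?_⟩
    have hik' : (1 + 2 * i : ℝ) ≤ 2 * k := by exact_mod_cast (by omega : 1 + 2 * i ≤ 2 * k)
    have hle : (1 + 2 * i) * (π / (2 * k)) ≤ π :=
      calc _ ≤ (2 * k) * (π / (2 * k)) := by gcongr
        _ = π := by field_simp
    rw [sphereDist, hm, hi, arccos_cos (by positivity) hle]

theorem isClosed_sigmaSphere (k : ℕ) (x₀ y₀ : ℝ³) : IsClosed (sigmaSphere k x₀ y₀) := by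
  have hdist : ∀ w : ℝ³,
      IsClosed {p | ∃ i : ℕ, i < k ∧ sphereDist p w = (1 + 2 * i) * (π / (2 * k))} := by
    intro w
    convert ((finite_Iio k).image fun i : ℕ => (1 + 2 * i) * (π / (2 * k))).isClosed.preimage
      (continuous_sphereDist_left w) using 1
    ext p
    simp [eq_comm]
  have h2 : Continuous fun p : ℝ³ => p 2 := by fun_prop
  exact (Metric.isClosed_sphere.inter ((isClosed_le continuous_const h2).inter (hdist x₀))).union
    (Metric.isClosed_sphere.inter ((isClosed_le h2 continuous_const).inter (hdist y₀)))

theorem sigmaSphere_eq_iUnion {k : ℕ} (hk : 0 < k) {x₀ y₀ : ℝ³} (hx : ‖x₀‖ = 1)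
    (hy : ‖y₀‖ = 1) (s : ℤ) :
    sigmaSphere k x₀ y₀ = ⋃ m : ℤ,
      (halfCircle x₀ e₂ (cos ((1 + 2 * m) * (π / (2 * k)))) ∪
        halfCircle y₀ (-e₂) (cos ((1 + 2 * ((m - s : ℤ) : ℝ)) * (π / (2 * k))))) := by
  have hshift := (Equiv.subRight s).surjective.iUnion_comp
    fun m : ℤ => halfCircle y₀ (-e₂) (cos ((1 + 2 * m) * (π / (2 * k))))
  simp only [Equiv.subRight_apply] at hshift
  rw [iUnion_union_distrib, hshift]
  ext p
  by_cases hp : ‖p‖ = 1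
  · simp [sigmaSphere, halfCircle, hp, EuclideanSpace.inner_single_right,
      exists_sphereDist_eq_odd_mul_iff hk hp hx,
      exists_sphereDist_eq_odd_mul_iff hk hp hy]
  · simp [sigmaSphere, halfCircle, hp]

theorem isConnected_sigmaSphere_rotZ {k : ℕ} (hk : 0 < k) {s : ℤ} (hs : IsCoprime s k)
    {x : ℝ³} (hx : ‖x‖ = 1) (hx2 : x 2 = 0) :
    IsConnected (sigmaSphere k x (rotZ (2 * s * (π / (2 * k))) x)) := by
  have h2π : 4 * k * (π / (2 * k)) = 2 * π := by field_simp; ring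
  set u := π / (2 * k)
  set y := rotZ (2 * s * u) x
  have hy : ‖y‖ = 1 := norm_rotZ hx hx2 _
  have he₂ : ‖(e₂ : ℝ³)‖ = 1 := by simp
  have hU : ∀ θ (m : ℤ), cos θ = cos ((1 + 2 * m) * u) →
      rotZ θ x ∈ halfCircle x e₂ (cos ((1 + 2 * m) * u)) := fun θ m h =>
    ⟨by simpa using norm_rotZ hx hx2 θ, by simp [EuclideanSpace.inner_single_right, hx2],
      by rw [inner_rotZ_self hx hx2, h]⟩
  have hL : ∀ θ (m : ℤ), cos (θ - 2 * s * u) = cos ((1 + 2 * m) * u) →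
      rotZ θ x ∈ halfCircle y (-e₂) (cos ((1 + 2 * m) * u)) := fun θ m h =>
    ⟨by simpa using norm_rotZ hx hx2 θ, by simp [EuclideanSpace.inner_single_right, hx2],
      by rw [inner_rotZ_rotZ hx hx2, h]⟩
  rw [sigmaSphere_eq_iUnion hk hx hy s]
  refine IsConnected.iUnion_of_reflTransGen (fun m => ?_) ?_
  · have hV : finrank ℝ ℝ³ = 3 := finrank_euclideanSpace_fin
    refine IsConnected.union ⟨rotZ ((1 + 2 * m) * u) x, hU _ _ rfl, hL _ _ ?_⟩
      (isConnected_halfCircle hV hx he₂ (by simp [EuclideanSpace.inner_single_right, hx2])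
        (abs_cos_le_one _))
      (isConnected_halfCircle hV hy (by rwa [norm_neg])
        (by simp [EuclideanSpace.inner_single_right, y, hx2]) (abs_cos_le_one _))
    congr 1; push_cast; ring
  · refine @Int.reflTransGen_of_isCoprime _ ⟨fun _ _ ⟨p, hp⟩ => ⟨p, hp.symm⟩⟩ _ _ hs
      (fun m => ?_) (fun m => ?_) (fun m => ?_)
    · refine ⟨rotZ (-((1 + 2 * m) * u)) x, Or.inl (hU _ _ (cos_neg _)), Or.inr (hL _ _ ?_)⟩
      rw [← cos_neg]; congr 1; push_cast; ring
    · refine ⟨rotZ ((1 + 2 * m) * u) x, Or.inl (hU _ _ rfl), Or.inl (hU _ _ ?_)⟩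
      rw [← cos_add_two_pi]; congr 1; push_cast; linear_combination -h2π
    · refine ⟨rotZ ((1 + 2 * m) * u) x, Or.inl (hU _ _ rfl), Or.inl (hU _ _ ?_)⟩
      rw [← cos_neg]; congr 1; push_cast; ring

/-- For `x₀, y₀` on the equator at spherical distance `2s·π/(2k)` with
`gcd(s,k) = 1`, the set `σ_s` is a connected closed subset of `S²`. -/
theorem sigmaSphere_closed_connected (k s : ℕ) (hk : 1 ≤ k)
    (hcop : Nat.Coprime s k)
    (x₀ y₀ : EuclideanSpace ℝ (Fin 3))
    (hx : x₀ ∈ Metric.sphere (0 : EuclideanSpace ℝ (Fin 3)) 1) (hx2 : x₀ 2 = 0)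
    (hy : y₀ ∈ Metric.sphere (0 : EuclideanSpace ℝ (Fin 3)) 1) (hy2 : y₀ 2 = 0)
    (hdist : sphereDist x₀ y₀ = 2 * s * (π / (2 * k))) :
    sigmaSphere k x₀ y₀ ⊆ Metric.sphere (0 : EuclideanSpace ℝ (Fin 3)) 1 ∧
    IsClosed (sigmaSphere k x₀ y₀) ∧ IsConnected (sigmaSphere k x₀ y₀) := by
  rw [mem_sphere_zero_iff_norm] at hx hy
  refine ⟨fun p hp => hp.elim (·.1) (·.1), isClosed_sigmaSphere k x₀ y₀, ?_⟩
  have hcop' : IsCoprime (s : ℤ) k := Nat.isCoprime_iff_coprime.mpr hcop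
  rw [sphereDist] at hdist
  rcases eq_rotZ_or_eq_rotZ_neg hx hx2 hy hy2 with hy₀ | hy₀ <;> rw [hdist] at hy₀ <;> rw [hy₀]
  · exact isConnected_sigmaSphere_rotZ hk hcop' hx hx2
  · simpa [neg_mul] using isConnected_sigmaSphere_rotZ (s := -s) hk hcop'.neg_left hx hx2
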